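/- Let b ≥ 2 be an integer, take E = {b−1}, and set c_m = ∫_{[0,1)} (1 − x)^m dμ_{b,{b−1}}(x) for m ≥ 0. Then for every integer m ≥ 1, Σ_{j=1}^{m} C(m,j)·(b^{m+1−j} − b^{j} + 1)·c_{m−j} = b·((b+1)^m − b^m), where C(m,j) is the binomial coefficient. -/

import Mathlib

open MeasureTheory Real ENNReal

/-- The digamma function `ψ(x) = d/dx log Γ(x)`. -/
noncomputable def digamma (x : ℝ) : ℝ := deriv (fun y => Real.log (Real.Gamma y)) x

/-- The Kempner sum `K(b,E)`: sum of reciprocals of positive integers whose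
base-`b` digits all avoid the excluded set `E`. -/
noncomputable def kempnerSum (b : ℕ) (E : Finset ℕ) : ℝ :=
  ∑' n : ℕ, if n ≠ 0 ∧ ∀ d ∈ Nat.digits b n, d ∉ E then (n : ℝ)⁻¹ else 0

/-- The measure `μ_{b,E}` on `[0,1)`: the sum, over all finite strings of admissible
digits (digits `< b` not in `E`), of the weighted Dirac mass `b^{-l} δ_{n(X)/b^l}`. -/
noncomputable def kempnerMeasure (b : ℕ) (E : Finset ℕ) : Measure ℝ :=
  Measure.sum (fun X : {l : List ℕ // ∀ d ∈ l, d < b ∧ d ∉ E} =>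
    ((b : ℝ≥0∞) ^ X.1.length)⁻¹ •
      Measure.dirac (((Nat.ofDigits b X.1 : ℕ) : ℝ) / (b : ℝ) ^ X.1.length))

/-- `E₁ = E` if `0 ∉ E`, and `E₁ = (E ∪ {b}) \ {0}` if `0 ∈ E`. -/
def Eone (b : ℕ) (E : Finset ℕ) : Finset ℕ :=
  if 0 ∈ E then insert b (E.erase 0) else E

/-- `ζ(s) = ∑_{k ≥ 1} k⁻ˢ`. -/
noncomputable def zetaVal (s : ℕ) : ℝ := ∑' k : ℕ, (((k : ℝ) + 1) ^ s)⁻¹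

/-- `v_m(d) = ∫_{[0,1)} (d - x)^m dμ_{b,E}(x)`. -/
noncomputable def vMoment (b : ℕ) (E : Finset ℕ) (m : ℕ) (d : ℝ) : ℝ :=
  ∫ x in Set.Ico (0 : ℝ) 1, (d - x) ^ m ∂(kempnerMeasure b E)

/-!
Splitting off the most significant digit of a string shows that `μ = μ_{b,{b-1}}` is
self-similar: `μ = δ₀ + b⁻¹ ∑_{d < b-1} ((x + d) / b)_* μ`. For `w(s) = ∫ (s - x)^m dμ` this
gives `b^{m+1} w(s) = b^{m+1} s^m + ∑_{d < b-1} w(b s - d)`. At `s = 1` and `s = 1 + 1/b` the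
digit sums differ by the telescoping sum `w(b+1) - w(2)`, and the binomial expansion
`w(t + 1) = ∑_j C(m,j) t^j c_{m-j}` at `t = 1/b, b, 1` turns the difference into the
recurrence.
All integrals are finite because `μ` has mass `∑_n ((b-1)/b)^n = b` and is carried by `[0,1)`.
-/

open Finset

lemma ENNReal.tsum_option {α : Type*} (f : Option α → ℝ≥0∞) :
    ∑' o, f o = f none + ∑' a, f (some a) := by
  rw [← (Equiv.optionEquivSumPUnit.{0} α).symm.tsum_eq,
    ENNReal.summable.tsum_sum ENNReal.summable]
  simp [add_comm]

def admissibleDigits (b : ℕ) (E : Finset ℕ) : Finset ℕ := range b \ E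

@[simp]
lemma mem_admissibleDigits {b d : ℕ} {E : Finset ℕ} :
    d ∈ admissibleDigits b E ↔ d < b ∧ d ∉ E := by
  simp [admissibleDigits]

lemma admissibleDigits_singleton_pred (b : ℕ) : admissibleDigits b {b - 1} = range (b - 1) := by
  ext d
  simp only [mem_admissibleDigits, mem_singleton, mem_range]
  omega

abbrev DigitString (b : ℕ) (E : Finset ℕ) := {l : List ℕ // ∀ d ∈ l, d < b ∧ d ∉ E}

namespace DigitString

variable {b : ℕ} {E : Finset ℕ}

noncomputable def point (X : DigitString b E) : ℝ :=
  ((Nat.ofDigits b X.1 : ℕ) : ℝ) / (b : ℝ) ^ X.1.length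

noncomputable def weight (X : DigitString b E) : ℝ≥0∞ := ((b : ℝ≥0∞) ^ X.1.length)⁻¹

lemma point_mem_Ico (hb : 1 < b) (X : DigitString b E) : X.point ∈ Set.Ico (0 : ℝ) 1 := by
  have hpos : (0 : ℝ) < (b : ℝ) ^ X.1.length := by positivity
  refine ⟨by unfold point; positivity, (div_lt_one hpos).2 ?_⟩
  exact_mod_cast Nat.ofDigits_lt_base_pow_length hb fun d hd => (X.2 d hd).1

/-- `d` becomes the most significant digit: `Nat.ofDigits` reads lists little-endian. -/
def snoc (X : DigitString b E) (d : admissibleDigits b E) : DigitString b E :=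
  ⟨X.1 ++ [d.1], List.forall_mem_append.2
    ⟨X.2, List.forall_mem_singleton.2 (mem_admissibleDigits.1 d.2)⟩⟩

lemma point_snoc (hb : b ≠ 0) (X : DigitString b E) (d : admissibleDigits b E) :
    (X.snoc d).point = (X.point + d) / b := by
  have hb' : (b : ℝ) ≠ 0 := by exact_mod_cast hb
  simp only [point, snoc, Nat.ofDigits_append, Nat.ofDigits_singleton, List.length_append,
    List.length_singleton, pow_succ]
  push_cast
  field_simp

lemma weight_snoc (X : DigitString b E) (d : admissibleDigits b E) :
    (X.snoc d).weight = (b : ℝ≥0∞)⁻¹ * X.weight := by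
  simp only [weight, snoc, List.length_append, List.length_singleton, pow_succ]
  rw [ENNReal.mul_inv (by simp) (by simp), mul_comm]

def snocEquiv : Option (DigitString b E × admissibleDigits b E) ≃ DigitString b E where
  toFun
    | none => ⟨[], by simp⟩
    | some (X, d) => X.snoc d
  invFun X :=
    if h : X.1 = [] then none
    else some (⟨X.1.dropLast, fun d hd => X.2 d (List.dropLast_subset _ hd)⟩,
      ⟨X.1.getLast h, mem_admissibleDigits.2 (X.2 _ (List.getLast_mem h))⟩)
  left_inv
    | none => by simp
    | some (X, d) => by simp [snoc]
  right_inv X := by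
    by_cases h : X.1 = []
    · simpa [h] using (Subtype.ext h).symm
    · simpa [h, snoc] using Subtype.ext (List.dropLast_append_getLast h)

def equivList : DigitString b E ≃ List (admissibleDigits b E) where
  toFun X := X.1.pmap Subtype.mk fun d hd => mem_admissibleDigits.2 (X.2 d hd)
  invFun l := ⟨l.map Subtype.val, fun d hd => by
    obtain ⟨x, -, rfl⟩ := List.mem_map.1 hd
    exact mem_admissibleDigits.1 x.2⟩
  left_inv X := Subtype.ext (by simp [List.map_pmap])
  right_inv l := by
    simp only [List.pmap_map]
    exact List.pmap_eq_self.2 fun _ _ => rfl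

lemma tsum_weight :
    ∑' X : DigitString b E, X.weight = ∑' n, ((#(admissibleDigits b E) : ℝ≥0∞) / b) ^ n := by
  rw [← equivList.symm.tsum_eq, ← List.equivSigmaTuple.symm.tsum_eq, ENNReal.tsum_sigma']
  refine tsum_congr fun n => ?_
  simp [weight, equivList, List.equivSigmaTuple, ENNReal.div_eq_inv_mul, mul_pow,
    ENNReal.inv_pow, mul_comm]

end DigitString

section KempnerMeasure

variable {b : ℕ} {E : Finset ℕ}

lemma kempnerMeasure_eq_sum :
    kempnerMeasure b E = Measure.sum fun X : DigitString b E => X.weight • Measure.dirac X.point :=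
  rfl

theorem kempnerMeasure_eq_dirac_add (hb : b ≠ 0) :
    kempnerMeasure b E = Measure.dirac (0 : ℝ) + (b : ℝ≥0∞)⁻¹ •
      ∑ d ∈ admissibleDigits b E, (kempnerMeasure b E).map fun x : ℝ => (x + d) / b := by
  have hmeas : ∀ d : ℕ, Measurable fun x : ℝ => (x + d) / b := by fun_prop
  ext s hs
  have hpre : ∀ (d : ℕ) (y : ℝ),
      Measure.dirac y ((fun x => (x + d) / b) ⁻¹' s) = Measure.dirac ((y + d) / b) s := by
    intro d y
    rw [← Measure.map_apply (hmeas d) hs, Measure.map_dirac' (hmeas d)]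
  simp only [Measure.add_apply, Measure.smul_apply, Measure.coe_finsetSum, Finset.sum_apply,
    Measure.map_apply (hmeas _) hs, kempnerMeasure_eq_sum, Measure.sum_apply_of_countable,
    smul_eq_mul, hpre]
  rw [← DigitString.snocEquiv.tsum_eq, ENNReal.tsum_option, ENNReal.tsum_prod', ENNReal.tsum_comm,
    ← Finset.tsum_subtype, ← ENNReal.tsum_mul_left]
  congr 1
  · simp [DigitString.snocEquiv, DigitString.weight, DigitString.point]
  · refine tsum_congr fun d => ?_
    rw [← ENNReal.tsum_mul_left]
    refine tsum_congr fun X => ?_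
    simp only [DigitString.snocEquiv, Equiv.coe_fn_mk, DigitString.weight_snoc,
      DigitString.point_snoc hb, mul_assoc]

lemma ae_kempnerMeasure_mem_Ico (hb : 1 < b) :
    ∀ᵐ x ∂kempnerMeasure b E, x ∈ Set.Ico (0 : ℝ) 1 := by
  rw [kempnerMeasure_eq_sum, Measure.ae_sum_iff]
  exact fun X =>
    Measure.ae_smul_measure ((ae_dirac_iff measurableSet_Ico).2 (X.point_mem_Ico hb)) _

lemma restrict_Ico_kempnerMeasure (hb : 1 < b) :
    (kempnerMeasure b E).restrict (Set.Ico 0 1) = kempnerMeasure b E :=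
  Measure.restrict_eq_self_of_ae_mem (ae_kempnerMeasure_mem_Ico hb)

lemma kempnerMeasure_univ :
    kempnerMeasure b E Set.univ = ∑' n, ((#(admissibleDigits b E) : ℝ≥0∞) / b) ^ n := by
  simp [kempnerMeasure_eq_sum, DigitString.tsum_weight]

lemma isFiniteMeasure_kempnerMeasure (hE : #(admissibleDigits b E) < b) :
    IsFiniteMeasure (kempnerMeasure b E) := by
  refine ⟨kempnerMeasure_univ.trans_lt (tsum_geometric_lt_top.2 ?_)⟩
  rw [ENNReal.div_lt_iff (Or.inl (Nat.cast_ne_zero.2 (by omega)))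
    (Or.inl (ENNReal.natCast_ne_top b)), one_mul]
  exact_mod_cast hE

variable [IsFiniteMeasure (kempnerMeasure b E)]

lemma Continuous.integrable_kempnerMeasure (hb : 1 < b) {g : ℝ → ℝ} (hg : Continuous g) :
    Integrable g (kempnerMeasure b E) := by
  rw [← restrict_Ico_kempnerMeasure hb]
  exact hg.integrableOn_Icc.mono_set Set.Ico_subset_Icc_self

theorem integral_kempnerMeasure_eq (hb : 1 < b) {g : ℝ → ℝ} (hg : Continuous g) :
    ∫ x, g x ∂kempnerMeasure b E =
      g 0 + (b : ℝ)⁻¹ *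
        ∑ d ∈ admissibleDigits b E, ∫ x, g ((x + d) / b) ∂kempnerMeasure b E := by
  have hφ : ∀ d : ℕ, AEMeasurable (fun x : ℝ => (x + d) / b) (kempnerMeasure b E) :=
    fun d => by fun_prop
  have hint : ∀ d : ℕ, Integrable g ((kempnerMeasure b E).map fun x : ℝ => (x + d) / b) :=
    fun d => (integrable_map_measure hg.aestronglyMeasurable (hφ d)).2
      ((hg.comp (by fun_prop)).integrable_kempnerMeasure hb)
  conv_lhs => rw [kempnerMeasure_eq_dirac_add (by omega)]
  rw [integral_add_measure (integrable_dirac (by simp))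
      ((integrable_finsetSum_measure.2 fun d _ => hint d).smul_measure
        (by simpa using (by omega : b ≠ 0))),
    integral_dirac, integral_smul_measure, integral_finsetSum_measure fun d _ => hint d]
  simp [integral_map (hφ _) hg.aestronglyMeasurable]

end KempnerMeasure

section Moments

variable {b : ℕ} {E : Finset ℕ}

lemma vMoment_eq_integral (hb : 1 < b) (m : ℕ) (s : ℝ) :
    vMoment b E m s = ∫ x, (s - x) ^ m ∂kempnerMeasure b E := by
  rw [vMoment, restrict_Ico_kempnerMeasure hb]

variable [IsFiniteMeasure (kempnerMeasure b E)]

theorem pow_mul_vMoment (hb : 1 < b) (m : ℕ) (s : ℝ) :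
    (b : ℝ) ^ (m + 1) * vMoment b E m s =
      (b : ℝ) ^ (m + 1) * s ^ m + ∑ d ∈ admissibleDigits b E, vMoment b E m (b * s - d) := by
  have hb0 : (b : ℝ) ≠ 0 := by positivity
  have hscale : ∀ (d : ℕ) (x : ℝ),
      (s - (x + d) / b) ^ m = ((b : ℝ) ^ m)⁻¹ * (b * s - d - x) ^ m := by
    intro d x
    rw [← inv_pow, ← mul_pow]
    congr 1
    field_simp
    ring
  simp only [vMoment_eq_integral hb]
  rw [integral_kempnerMeasure_eq hb (by fun_prop)]
  simp only [hscale, integral_const_mul, ← mul_sum]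
  field_simp
  ring

lemma pow_mul_vMoment_one (hb : 1 < b) (m : ℕ) :
    (b : ℝ) ^ (m + 1) * vMoment b E m 1 =
      (b : ℝ) ^ (m + 1) + ∑ d ∈ admissibleDigits b E, vMoment b E m (b - d) := by
  simpa using pow_mul_vMoment hb m 1

lemma pow_mul_vMoment_inv_add_one (hb : 1 < b) (m : ℕ) :
    (b : ℝ) ^ (m + 1) * vMoment b E m ((b : ℝ)⁻¹ + 1) =
      b * (b + 1) ^ m + ∑ d ∈ admissibleDigits b E, vMoment b E m (b + 1 - d) := by
  have hstep : (b : ℝ) * ((b : ℝ)⁻¹ + 1) = b + 1 := by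
    rw [mul_add, mul_inv_cancel₀ (by positivity), mul_one, add_comm]
  rw [pow_mul_vMoment hb, hstep, pow_succ, mul_comm _ (b : ℝ), mul_assoc, ← mul_pow, hstep]

lemma vMoment_add_one (hb : 1 < b) (m : ℕ) (t : ℝ) :
    vMoment b E m (t + 1) =
      ∑ j ∈ range (m + 1), (m.choose j : ℝ) * t ^ j * vMoment b E (m - j) 1 := by
  have hexpand : ∀ x : ℝ, (t + 1 - x) ^ m =
      ∑ j ∈ range (m + 1), (m.choose j * t ^ j) * (1 - x) ^ (m - j) := by
    intro x
    rw [show t + 1 - x = t + (1 - x) by ring, add_pow]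
    exact sum_congr rfl fun j _ => by ring
  simp only [vMoment_eq_integral hb, hexpand]
  have hint : ∀ j : ℕ, Integrable (fun x : ℝ => (1 - x) ^ j) (kempnerMeasure b E) :=
    fun j => (by fun_prop : Continuous fun x : ℝ => (1 - x) ^ j).integrable_kempnerMeasure hb
  rw [integral_finsetSum _ fun j _ => (hint (m - j)).const_mul _]
  simp only [integral_const_mul]

lemma sum_range_choose_mul_vMoment (hb : 1 < b) (m : ℕ) :
    ∑ j ∈ range (m + 1), (m.choose j : ℝ) * ((b : ℝ) ^ (m + 1 - j) - (b : ℝ) ^ j + 1) *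
        vMoment b E (m - j) 1 =
      (b : ℝ) ^ (m + 1) * vMoment b E m ((b : ℝ)⁻¹ + 1) - vMoment b E m (b + 1) +
        vMoment b E m 2 := by
  rw [← one_add_one_eq_two]
  simp only [vMoment_add_one hb, mul_sum, ← sum_sub_distrib, ← sum_add_distrib]
  refine sum_congr rfl fun j hj => ?_
  rw [pow_sub₀ _ (by positivity) (by simp at hj; omega), inv_pow]
  ring

end Moments

lemma sum_range_pred_sub_sum_range_pred (f : ℝ → ℝ) {b : ℕ} (hb : 1 ≤ b) :
    ∑ d ∈ range (b - 1), f (b + 1 - d) - ∑ d ∈ range (b - 1), f (b - d) = f (b + 1) - f 2 := by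
  rw [← sum_sub_distrib]
  convert sum_range_sub' (fun i : ℕ => f (b + 1 - i)) (b - 1) using 2 with i
  · congr 2
    push_cast
    ring
  · simp
  · congr 1
    rw [Nat.cast_sub hb, Nat.cast_one]
    ring

theorem complementary_moment_recurrence (b : ℕ) (hb : 2 ≤ b) :
    ∀ m : ℕ, 1 ≤ m →
      ∑ j ∈ Finset.Icc 1 m, (m.choose j : ℝ) *
          ((b : ℝ) ^ (m + 1 - j) - (b : ℝ) ^ j + 1) *
          (∫ x in Set.Ico (0 : ℝ) 1, (1 - x) ^ (m - j) ∂(kempnerMeasure b {b - 1})) =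
        (b : ℝ) * (((b : ℝ) + 1) ^ m - (b : ℝ) ^ m) := by
  intro m _
  have := isFiniteMeasure_kempnerMeasure (E := {b - 1})
    (by rw [admissibleDigits_singleton_pred, card_range]; omega)
  have h1 := pow_mul_vMoment_one (E := {b - 1}) hb m
  have h2 := pow_mul_vMoment_inv_add_one (E := {b - 1}) hb m
  rw [admissibleDigits_singleton_pred] at h1 h2
  have htel := sum_range_pred_sub_sum_range_pred (vMoment b {b - 1} m) (by omega : 1 ≤ b)
  have hsum := sum_range_choose_mul_vMoment (E := {b - 1}) hb m
  rw [Nat.range_succ_eq_Icc_zero, ← add_sum_Ioc_eq_sum_Icc (Nat.zero_le m)] at hsum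
  simp only [Nat.choose_zero_right, Nat.sub_zero, pow_zero, Nat.cast_one, one_mul] at hsum
  change ∑ j ∈ Icc 1 m, (m.choose j : ℝ) * ((b : ℝ) ^ (m + 1 - j) - (b : ℝ) ^ j + 1) *
      vMoment b {b - 1} (m - j) 1 = _
  rw [show Icc 1 m = Ioc 0 m from Icc_succ_left_eq_Ioc 0 m]
  linear_combination hsum - h1 + h2 + htel
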